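/- arXiv:2211.09919 — 2 statements merged into one kernel-verified Lean document; each statement's English description precedes it below -/
import Mathlib

section
/- Under the same setup (z⁽¹⁾, z⁽²⁾ independent zero-mean Gaussian fields with autocovariance R_ZZ, σ_z² = R_ZZ(0,0), deterministic x⁽ᵏ⁾, y⁽ᵏ⁾ = x⁽ᵏ⁾ + z⁽ᵏ⁾), the variance of δ_y = (1/n²)Σ_{i,j}(y⁽²⁾_{i,j} − y⁽¹⁾_{i,j})² satisfies var[δ_y] ≥ (8/n²)·σ_z⁴·ρ, where ρ = (1/n²)·Σ_{i₁,j₁,i₂,j₂=1}^n (R_ZZ(i₁ − j₁, i₂ − j₂)/σ_z²)², with equality when x⁽¹⁾ = x⁽²⁾. -/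
open MeasureTheory ProbabilityTheory

/-- A family of real random variables is centered jointly Gaussian if every finite
linear combination has a (possibly degenerate) centered Gaussian law. -/
def IsCenteredGaussianFamily {Ω ι : Type*} [MeasurableSpace Ω] (μ : Measure Ω)
    (Z : ι → Ω → ℝ) : Prop :=
  ∀ (s : Finset ι) (c : ι → ℝ), ∃ v : NNReal,
    Measure.map (fun ω => ∑ i ∈ s, c i * Z i ω) μ = gaussianReal 0 v

open Real Filter MeasureTheory ProbabilityTheory

namespace NoisyPatchAux

lemma integrable_pow_mul_gauss {b : ℝ} (hb : 0 < b) (k : ℕ) :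
    Integrable (fun x : ℝ => x ^ k * Real.exp (-b * x ^ 2)) := by
  have h := integrable_rpow_mul_exp_neg_mul_sq hb (s := (k : ℝ))
    (lt_of_lt_of_le neg_one_lt_zero (Nat.cast_nonneg k))
  simpa [Real.rpow_natCast] using h

lemma tendsto_pow_mul_gauss_atTop {b : ℝ} (hb : 0 < b) (k : ℕ) :
    Tendsto (fun x : ℝ => x ^ k * Real.exp (-b * x ^ 2)) atTop (nhds 0) := by
  have h1 : Tendsto (fun y : ℝ => y ^ k * Real.exp (-y)) atTop (nhds 0) := by
    simpa [Real.exp_neg, div_eq_mul_inv] using tendsto_pow_mul_exp_neg_atTop_nhds_zero k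
  have h2 : Tendsto (fun x : ℝ => b * x ^ 2) atTop atTop := by
    exact (tendsto_pow_atTop (two_ne_zero)).const_mul_atTop hb
  have h3 : Tendsto (fun x : ℝ => (b * x ^ 2) ^ k * Real.exp (-(b * x ^ 2))) atTop (nhds 0) :=
    h1.comp h2
  have h4 : Tendsto (fun x : ℝ => b⁻¹ ^ k * ((b * x ^ 2) ^ k * Real.exp (-(b * x ^ 2))))
      atTop (nhds 0) := by
    simpa using h3.const_mul (b⁻¹ ^ k)
  refine squeeze_zero_norm' ?_ h4
  filter_upwards [eventually_ge_atTop (1 : ℝ)] with x hx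
  have hx0 : (0:ℝ) ≤ x := le_trans zero_le_one hx
  have hb' : b⁻¹ ^ k * ((b * x ^ 2) ^ k * Real.exp (-(b * x ^ 2)))
      = x ^ (2 * k) * Real.exp (-b * x ^ 2) := by
    rw [← mul_assoc, ← mul_pow, show b⁻¹ * (b * x ^ 2) = x ^ 2 by field_simp, ← pow_mul, neg_mul]
  rw [hb']
  rw [Real.norm_eq_abs, abs_mul, abs_of_nonneg (Real.exp_pos _).le, abs_pow, abs_of_nonneg hx0]
  apply mul_le_mul_of_nonneg_right _ (Real.exp_pos _).le
  exact pow_le_pow_right₀ hx (by omega)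

lemma tendsto_pow_mul_gauss_atBot {b : ℝ} (hb : 0 < b) (k : ℕ) :
    Tendsto (fun x : ℝ => x ^ k * Real.exp (-b * x ^ 2)) atBot (nhds 0) := by
  have h := (tendsto_pow_mul_gauss_atTop hb k).comp tendsto_neg_atBot_atTop
  have h2 : Tendsto (fun x : ℝ => ((-1:ℝ)) ^ k * ((-x) ^ k * Real.exp (-b * (-x) ^ 2)))
      atBot (nhds 0) := by simpa using h.const_mul ((-1:ℝ) ^ k)
  refine h2.congr fun x => ?_
  rw [← mul_assoc, ← mul_pow, neg_sq, show (-1 : ℝ) * -x = x by ring]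

lemma integral_gauss_ibp {b : ℝ} (hb : 0 < b) (k : ℕ) :
    ((k : ℝ) + 1) * ∫ x : ℝ, x ^ k * Real.exp (-b * x ^ 2)
      = 2 * b * ∫ x : ℝ, x ^ (k + 2) * Real.exp (-b * x ^ 2) := by
  set g : ℝ → ℝ := fun x => x ^ (k + 1) * Real.exp (-b * x ^ 2) with hg
  set F : ℝ → ℝ := fun x => ((k:ℝ)+1) * (x ^ k * Real.exp (-b * x ^ 2))
      - 2 * b * (x ^ (k+2) * Real.exp (-b * x ^ 2)) with hFdef
  have hderiv : ∀ x : ℝ, HasDerivAt g (F x) x := by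
    intro x
    have h1 : HasDerivAt (fun x : ℝ => x ^ (k+1)) (((k:ℝ)+1) * x ^ k) x := by
      simpa using hasDerivAt_pow (k+1) x
    have h3 : HasDerivAt (fun x : ℝ => -b * x ^ 2) (-b * (2 * x)) x := by
      simpa using (hasDerivAt_pow 2 x).const_mul (-b)
    have h2 := h3.exp
    have := h1.fun_mul h2
    refine this.congr_deriv ?_
    simp only [F]
    ring
  have hint : Integrable F := by
    exact ((integrable_pow_mul_gauss hb k).const_mul _).sub
      ((integrable_pow_mul_gauss hb (k+2)).const_mul _)
  have hzero : ∫ x : ℝ, F x = 0 := by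
    have h1 : Tendsto (fun i : ℝ => ∫ x in (-i)..i, F x) atTop (nhds (∫ x : ℝ, F x)) :=
      intervalIntegral_tendsto_integral hint tendsto_neg_atTop_atBot tendsto_id
    have h2 : ∀ i : ℝ, ∫ x in (-i)..i, F x = g i - g (-i) := fun i =>
      intervalIntegral.integral_eq_sub_of_hasDerivAt (fun x _ => hderiv x)
        hint.intervalIntegrable
    have h3 : Tendsto (fun i : ℝ => ∫ x in (-i)..i, F x) atTop (nhds 0) := by
      simp_rw [h2]
      have := ((tendsto_pow_mul_gauss_atTop hb (k+1)).sub
        ((tendsto_pow_mul_gauss_atBot hb (k+1)).comp tendsto_neg_atTop_atBot))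
      simpa [hg, Function.comp] using this
    exact tendsto_nhds_unique h1 h3
  have hsplit : ∫ x : ℝ, F x
      = ((k:ℝ)+1) * (∫ x : ℝ, x ^ k * Real.exp (-b * x ^ 2))
        - 2 * b * ∫ x : ℝ, x ^ (k+2) * Real.exp (-b * x ^ 2) := by
    rw [hFdef]
    rw [integral_sub ((integrable_pow_mul_gauss hb k).const_mul _)
      ((integrable_pow_mul_gauss hb (k+2)).const_mul _), integral_const_mul, integral_const_mul]
  rw [hsplit] at hzero
  linarith

end NoisyPatchAux
open scoped NNReal ENNReal

namespace NoisyPatchAux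

lemma pdf_eq {v : ℝ≥0} (x : ℝ) :
    gaussianPDFReal 0 v x = (√(2 * π * v))⁻¹ * Real.exp (-(2 * (v:ℝ))⁻¹ * x ^ 2) := by
  simp only [gaussianPDFReal, sub_zero]
  congr 1
  rw [neg_div, neg_mul]
  congr 1
  rw [div_eq_inv_mul]

lemma pdf_neg {v : ℝ≥0} (x : ℝ) : gaussianPDFReal 0 v (-x) = gaussianPDFReal 0 v x := by
  simp [gaussianPDFReal, neg_sq]

lemma gaussianReal_integral_eq {v : ℝ≥0} (hv : v ≠ 0) (f : ℝ → ℝ) :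
    ∫ x, f x ∂(gaussianReal 0 v) = ∫ x, gaussianPDFReal 0 v x * f x := by
  rw [gaussianReal_of_var_ne_zero 0 hv]
  have hd : gaussianPDF 0 v = fun x => ((gaussianPDFReal 0 v x).toNNReal : ℝ≥0∞) := rfl
  rw [hd, integral_withDensity_eq_integral_smul ((measurable_gaussianPDFReal 0 v).real_toNNReal)]
  congr 1; ext x
  simp [NNReal.smul_def, Real.coe_toNNReal _ (gaussianPDFReal_nonneg 0 v x)]

lemma gaussianReal_integrable_iff {v : ℝ≥0} (hv : v ≠ 0) (f : ℝ → ℝ) :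
    Integrable f (gaussianReal 0 v) ↔
      Integrable (fun x => gaussianPDFReal 0 v x * f x) volume := by
  rw [gaussianReal_of_var_ne_zero 0 hv]
  have hd : gaussianPDF 0 v = fun x => ((gaussianPDFReal 0 v x).toNNReal : ℝ≥0∞) := rfl
  rw [hd, integrable_withDensity_iff_integrable_smul
    ((measurable_gaussianPDFReal 0 v).real_toNNReal)]
  constructor <;> intro h <;> refine h.congr (Filter.Eventually.of_forall fun x => ?_) <;>
    simp [NNReal.smul_def, Real.coe_toNNReal _ (gaussianPDFReal_nonneg 0 v x)]

lemma gauss_integrable_pow (v : ℝ≥0) (k : ℕ) :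
    Integrable (fun x : ℝ => x ^ k) (gaussianReal 0 v) := by
  by_cases hv : v = 0
  · subst hv
    rw [gaussianReal_zero_var]
    refine ⟨(measurable_id.pow_const k).aestronglyMeasurable, ?_⟩
    rw [hasFiniteIntegral_def, lintegral_dirac]
    exact ENNReal.coe_lt_top
  · rw [gaussianReal_integrable_iff hv]
    have hb : 0 < (2 * (v:ℝ))⁻¹ := by positivity
    have := (integrable_pow_mul_gauss hb k).const_mul (√(2 * π * v))⁻¹
    refine this.congr (Filter.Eventually.of_forall fun x => ?_)
    simp only [pdf_eq]
    ring

lemma gauss_pow_odd (v : ℝ≥0) (k : ℕ) (hk : Odd k) :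
    ∫ x, x ^ k ∂(gaussianReal 0 v) = 0 := by
  by_cases hv : v = 0
  · subst hv
    rw [gaussianReal_zero_var, integral_dirac]
    exact zero_pow hk.pos.ne'
  · rw [gaussianReal_integral_eq hv]
    have h1 : ∫ x : ℝ, gaussianPDFReal 0 v x * x ^ k
        = ∫ x : ℝ, gaussianPDFReal 0 v (-x) * (-x) ^ k :=
      (integral_neg_eq_self (fun x => gaussianPDFReal 0 v x * x ^ k) volume).symm
    have h2 : ∀ x : ℝ, gaussianPDFReal 0 v (-x) * (-x) ^ k
        = -(gaussianPDFReal 0 v x * x ^ k) := by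
      intro x
      rw [pdf_neg, hk.neg_pow]
      ring
    simp_rw [h2] at h1
    rw [integral_neg] at h1
    linarith

lemma gauss_normalization {v : ℝ≥0} (hv : v ≠ 0) :
    (√(2 * π * v))⁻¹ * ∫ x : ℝ, Real.exp (-(2 * (v:ℝ))⁻¹ * x ^ 2) = 1 := by
  have h := integral_gaussianPDFReal_eq_one 0 hv
  rw [show (gaussianPDFReal 0 v) = fun x => (√(2 * π * v))⁻¹ * Real.exp (-(2 * (v:ℝ))⁻¹ * x ^ 2)
    from funext fun x => pdf_eq x] at h
  rwa [integral_const_mul] at h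

lemma gauss_pow_four (v : ℝ≥0) :
    ∫ x, x ^ 4 ∂(gaussianReal 0 v) = 3 * (∫ x, x ^ 2 ∂(gaussianReal 0 v)) ^ 2 := by
  by_cases hv : v = 0
  · subst hv
    rw [gaussianReal_zero_var, integral_dirac, integral_dirac]
    norm_num
  · have hb : 0 < (2 * (v:ℝ))⁻¹ := by positivity
    set b : ℝ := (2 * (v:ℝ))⁻¹ with hbdef
    set C : ℝ := (√(2 * π * v))⁻¹ with hC
    have hnorm : C * ∫ x : ℝ, Real.exp (-b * x ^ 2) = 1 := gauss_normalization hv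
    have ibp0 : (1:ℝ) * ∫ x : ℝ, Real.exp (-b * x ^ 2)
        = 2 * b * ∫ x : ℝ, x ^ 2 * Real.exp (-b * x ^ 2) := by
      have h := integral_gauss_ibp hb 0
      norm_num at h
      convert h using 2 <;> norm_num
    have ibp2 : (3:ℝ) * ∫ x : ℝ, x ^ 2 * Real.exp (-b * x ^ 2)
        = 2 * b * ∫ x : ℝ, x ^ 4 * Real.exp (-b * x ^ 2) := by
      have h := integral_gauss_ibp hb 2
      norm_num at h
      convert h using 2 <;> norm_num
    have hint2 : ∫ x, x ^ 2 ∂(gaussianReal 0 v) = C * ∫ x : ℝ, x ^ 2 * Real.exp (-b * x ^ 2) := by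
      rw [gaussianReal_integral_eq hv]
      simp_rw [pdf_eq]
      rw [← integral_const_mul]
      congr 1; ext x; ring
    have hint4 : ∫ x, x ^ 4 ∂(gaussianReal 0 v) = C * ∫ x : ℝ, x ^ 4 * Real.exp (-b * x ^ 2) := by
      rw [gaussianReal_integral_eq hv]
      simp_rw [pdf_eq]
      rw [← integral_const_mul]
      congr 1; ext x; ring
    have hbne : (2 * b) ≠ 0 := by positivity
    have h2val : (2 * b) * ∫ x, x ^ 2 ∂(gaussianReal 0 v) = 1 := by
      rw [hint2]
      linear_combination hnorm - C * ibp0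
    have h4val : (2 * b) * ∫ x, x ^ 4 ∂(gaussianReal 0 v) = 3 * ∫ x, x ^ 2 ∂(gaussianReal 0 v) := by
      rw [hint4, hint2]
      linear_combination (- C) * ibp2
    have key : (2 * b) * ∫ x, x ^ 4 ∂(gaussianReal 0 v)
        = (2 * b) * (3 * (∫ x, x ^ 2 ∂(gaussianReal 0 v)) ^ 2) := by
      linear_combination h4val - 3 * (∫ x, x ^ 2 ∂(gaussianReal 0 v)) * h2val
    exact mul_left_cancel₀ hbne key

end NoisyPatchAux
namespace NoisyPatchAux

variable {Ω : Type*} [MeasurableSpace Ω] {μ : Measure Ω}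

/-- Centered Gaussian real random variable. -/
def CG (μ : Measure Ω) (X : Ω → ℝ) : Prop :=
  Measurable X ∧ ∃ v : ℝ≥0, Measure.map X μ = gaussianReal 0 v

lemma CG.congr {X Y : Ω → ℝ} (h : CG μ X) (hXY : ∀ ω, X ω = Y ω) : CG μ Y :=
  (funext hXY : X = Y) ▸ h

lemma CG.meas {X : Ω → ℝ} (h : CG μ X) : Measurable X := h.1

lemma CG.integrable_pow {X : Ω → ℝ} (h : CG μ X) (k : ℕ) :
    Integrable (fun ω => X ω ^ k) μ := by
  obtain ⟨hm, v, hmap⟩ := h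
  have h1 : Integrable (fun x : ℝ => x ^ k) (Measure.map X μ) := by
    rw [hmap]; exact gauss_integrable_pow v k
  rw [integrable_map_measure (measurable_id'.pow_const k).aestronglyMeasurable
    hm.aemeasurable] at h1
  exact h1

lemma CG.integrable {X : Ω → ℝ} (h : CG μ X) : Integrable X μ := by
  have := h.integrable_pow 1
  simpa using this

lemma CG.transfer {X : Ω → ℝ} (hm : Measurable X) {v : ℝ≥0}
    (hmap : Measure.map X μ = gaussianReal 0 v) (k : ℕ) :
    ∫ ω, X ω ^ k ∂μ = ∫ x, x ^ k ∂(gaussianReal 0 v) := by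
  rw [← hmap, integral_map hm.aemeasurable (measurable_id'.pow_const k).aestronglyMeasurable]

lemma CG.m1 {X : Ω → ℝ} (h : CG μ X) : ∫ ω, X ω ∂μ = 0 := by
  obtain ⟨hm, v, hmap⟩ := h
  have := CG.transfer hm hmap 1
  simpa using this.trans (gauss_pow_odd v 1 ⟨0, by norm_num⟩)

lemma CG.m3 {X : Ω → ℝ} (h : CG μ X) : ∫ ω, X ω ^ 3 ∂μ = 0 := by
  obtain ⟨hm, v, hmap⟩ := h
  exact (CG.transfer hm hmap 3).trans (gauss_pow_odd v 3 ⟨1, by norm_num⟩)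

lemma CG.m4 {X : Ω → ℝ} (h : CG μ X) :
    ∫ ω, X ω ^ 4 ∂μ = 3 * (∫ ω, X ω ^ 2 ∂μ) ^ 2 := by
  obtain ⟨hm, v, hmap⟩ := h
  rw [CG.transfer hm hmap 4, CG.transfer hm hmap 2]
  exact gauss_pow_four v

section Integrability

lemma integrable_mul_of_sq {X Y : Ω → ℝ} (hX : Measurable X) (hY : Measurable Y)
    (h2X : Integrable (fun ω => X ω ^ 2) μ) (h2Y : Integrable (fun ω => Y ω ^ 2) μ) :
    Integrable (fun ω => X ω * Y ω) μ := by
  have hb : Integrable (fun ω => X ω ^ 2 + Y ω ^ 2) μ := h2X.add h2Y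
  refine hb.mono' (hX.mul hY).aestronglyMeasurable (ae_of_all _ fun ω => ?_)
  rw [Real.norm_eq_abs, abs_le]
  constructor <;> nlinarith [sq_nonneg (X ω + Y ω), sq_nonneg (X ω - Y ω)]

lemma integrable_sq_mul {X Y : Ω → ℝ} (hX : Measurable X) (hY : Measurable Y)
    (h4X : Integrable (fun ω => X ω ^ 4) μ) (h2Y : Integrable (fun ω => Y ω ^ 2) μ) :
    Integrable (fun ω => X ω ^ 2 * Y ω) μ := by
  have hb : Integrable (fun ω => X ω ^ 4 + Y ω ^ 2) μ := h4X.add h2Y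
  refine hb.mono' ((hX.pow_const 2).mul hY).aestronglyMeasurable (ae_of_all _ fun ω => ?_)
  rw [Real.norm_eq_abs, abs_le]
  constructor <;> nlinarith [sq_nonneg (X ω ^ 2 + Y ω), sq_nonneg (X ω ^ 2 - Y ω)]

lemma integrable_sq_sq {X Y : Ω → ℝ} (hX : Measurable X) (hY : Measurable Y)
    (h4X : Integrable (fun ω => X ω ^ 4) μ) (h4Y : Integrable (fun ω => Y ω ^ 4) μ) :
    Integrable (fun ω => X ω ^ 2 * Y ω ^ 2) μ := by
  have hb : Integrable (fun ω => X ω ^ 4 + Y ω ^ 4) μ := h4X.add h4Y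
  refine hb.mono' ((hX.pow_const 2).mul (hY.pow_const 2)).aestronglyMeasurable
    (ae_of_all _ fun ω => ?_)
  rw [Real.norm_eq_abs, abs_le]
  constructor <;> nlinarith [sq_nonneg (X ω ^ 2 + Y ω ^ 2), sq_nonneg (X ω ^ 2 - Y ω ^ 2)]

lemma integral_add3 {f g h : Ω → ℝ} (hf : Integrable f μ) (hg : Integrable g μ)
    (hh : Integrable h μ) :
    ∫ ω, (f ω + g ω + h ω) ∂μ = ∫ ω, f ω ∂μ + ∫ ω, g ω ∂μ + ∫ ω, h ω ∂μ := by
  have h1 : Integrable (fun ω => f ω + g ω) μ := hf.add hg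
  rw [integral_add h1 hh, integral_add hf hg]

end Integrability

section Pair

variable {X Y : Ω → ℝ}

lemma pair_m21 (hXY : ∀ s t : ℝ, CG μ (fun ω => s * X ω + t * Y ω)) :
    ∫ ω, X ω ^ 2 * Y ω ∂μ = 0 := by
  have hX : CG μ X := by simpa using hXY 1 0
  have hY : CG μ Y := by simpa using hXY 0 1
  have hP : CG μ (fun ω => X ω + Y ω) := (hXY 1 1).congr fun ω => by ring
  have hM : CG μ (fun ω => X ω - Y ω) := (hXY 1 (-1)).congr fun ω => by ring
  have hiXY : Integrable (fun ω => X ω ^ 2 * Y ω) μ :=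
    integrable_sq_mul hX.meas hY.meas (hX.integrable_pow 4) (hY.integrable_pow 2)
  have hi6 : Integrable (fun ω => 6 * (X ω ^ 2 * Y ω)) μ := hiXY.const_mul 6
  have hi2 : Integrable (fun ω => 2 * Y ω ^ 3) μ := (hY.integrable_pow 3).const_mul 2
  have hexp : ∀ ω, (X ω + Y ω) ^ 3 - (X ω - Y ω) ^ 3
      = 6 * (X ω ^ 2 * Y ω) + 2 * Y ω ^ 3 := fun ω => by ring
  have h1 : ∫ ω, ((X ω + Y ω) ^ 3 - (X ω - Y ω) ^ 3) ∂μ = 0 := by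
    rw [integral_sub (hP.integrable_pow 3) (hM.integrable_pow 3), hP.m3, hM.m3, sub_zero]
  have h2 : ∫ ω, ((X ω + Y ω) ^ 3 - (X ω - Y ω) ^ 3) ∂μ
      = 6 * (∫ ω, X ω ^ 2 * Y ω ∂μ) + 2 * ∫ ω, Y ω ^ 3 ∂μ := by
    simp_rw [hexp]
    rw [integral_add hi6 hi2, integral_const_mul, integral_const_mul]
  rw [h1, hY.m3] at h2
  linarith

lemma pair_m22 (hXY : ∀ s t : ℝ, CG μ (fun ω => s * X ω + t * Y ω)) :
    ∫ ω, X ω ^ 2 * Y ω ^ 2 ∂μ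
      = (∫ ω, X ω ^ 2 ∂μ) * (∫ ω, Y ω ^ 2 ∂μ) + 2 * (∫ ω, X ω * Y ω ∂μ) ^ 2 := by
  have hX : CG μ X := by simpa using hXY 1 0
  have hY : CG μ Y := by simpa using hXY 0 1
  have hP : CG μ (fun ω => X ω + Y ω) := (hXY 1 1).congr fun ω => by ring
  have hM : CG μ (fun ω => X ω - Y ω) := (hXY 1 (-1)).congr fun ω => by ring
  have hiXY : Integrable (fun ω => X ω * Y ω) μ :=
    integrable_mul_of_sq hX.meas hY.meas (hX.integrable_pow 2) (hY.integrable_pow 2)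
  have hiXXYY : Integrable (fun ω => X ω ^ 2 * Y ω ^ 2) μ :=
    integrable_sq_sq hX.meas hY.meas (hX.integrable_pow 4) (hY.integrable_pow 4)
  set a := ∫ ω, X ω ^ 2 ∂μ with ha
  set bb := ∫ ω, Y ω ^ 2 ∂μ with hbb
  set c := ∫ ω, X ω * Y ω ∂μ with hc
  have hi2c : Integrable (fun ω => 2 * (X ω * Y ω)) μ := hiXY.const_mul 2
  have hi2c' : Integrable (fun ω => -2 * (X ω * Y ω)) μ := hiXY.const_mul (-2)
  have hPsq : ∫ ω, (X ω + Y ω) ^ 2 ∂μ = a + 2 * c + bb := by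
    have hexp : ∀ ω, (X ω + Y ω) ^ 2 = X ω ^ 2 + 2 * (X ω * Y ω) + Y ω ^ 2 :=
      fun ω => by ring
    simp_rw [hexp]
    rw [integral_add3 (hX.integrable_pow 2) hi2c (hY.integrable_pow 2), integral_const_mul]
  have hMsq : ∫ ω, (X ω - Y ω) ^ 2 ∂μ = a - 2 * c + bb := by
    have hexp : ∀ ω, (X ω - Y ω) ^ 2 = X ω ^ 2 + -2 * (X ω * Y ω) + Y ω ^ 2 :=
      fun ω => by ring
    simp_rw [hexp]
    rw [integral_add3 (hX.integrable_pow 2) hi2c' (hY.integrable_pow 2), integral_const_mul]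
    ring
  have hP4 := hP.m4
  have hM4 := hM.m4
  rw [hPsq] at hP4
  rw [hMsq] at hM4
  have hi2x4 : Integrable (fun ω => 2 * X ω ^ 4) μ := (hX.integrable_pow 4).const_mul 2
  have hi12 : Integrable (fun ω => 12 * (X ω ^ 2 * Y ω ^ 2)) μ := hiXXYY.const_mul 12
  have hi2y4 : Integrable (fun ω => 2 * Y ω ^ 4) μ := (hY.integrable_pow 4).const_mul 2
  have hexp4 : ∀ ω, (X ω + Y ω) ^ 4 + (X ω - Y ω) ^ 4
      = 2 * X ω ^ 4 + 12 * (X ω ^ 2 * Y ω ^ 2) + 2 * Y ω ^ 4 := fun ω => by ring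
  have hsum : ∫ ω, ((X ω + Y ω) ^ 4 + (X ω - Y ω) ^ 4) ∂μ
      = 2 * (∫ ω, X ω ^ 4 ∂μ) + 12 * (∫ ω, X ω ^ 2 * Y ω ^ 2 ∂μ) + 2 * ∫ ω, Y ω ^ 4 ∂μ := by
    simp_rw [hexp4]
    rw [integral_add3 hi2x4 hi12 hi2y4, integral_const_mul, integral_const_mul, integral_const_mul]
  have hsum2 : ∫ ω, ((X ω + Y ω) ^ 4 + (X ω - Y ω) ^ 4) ∂μ
      = 3 * (a + 2 * c + bb) ^ 2 + 3 * (a - 2 * c + bb) ^ 2 := by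
    rw [integral_add (hP.integrable_pow 4) (hM.integrable_pow 4), hP4, hM4]
  rw [hsum, hX.m4, hY.m4] at hsum2
  linear_combination (1 / 12) * hsum2

end Pair

end NoisyPatchAux
namespace NoisyPatchAux

variable {Ω : Type*} [MeasurableSpace Ω] {μ : Measure Ω}

lemma variance_const_add [IsProbabilityMeasure μ] (A : ℝ) {V : Ω → ℝ} (hV : MemLp V 2 μ) :
    variance (fun ω => A + V ω) μ = variance V μ := by
  have hAV : MemLp (fun ω => A + V ω) 2 μ := (memLp_const A).add hV
  have hVi : Integrable V μ := hV.integrable one_le_two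
  have hV2 : Integrable (fun ω => V ω ^ 2) μ :=
    (memLp_two_iff_integrable_sq hV.aestronglyMeasurable).1 hV
  rw [variance_eq_sub hAV, variance_eq_sub hV]
  simp only [Pi.pow_apply]
  have e1 : ∫ ω, (A + V ω) ^ 2 ∂μ
      = A ^ 2 + (2 * A * (∫ ω, V ω ∂μ) + ∫ ω, V ω ^ 2 ∂μ) := by
    have hexp : ∀ ω, (A + V ω) ^ 2 = A ^ 2 + (2 * A * V ω + V ω ^ 2) := fun ω => by ring
    simp_rw [hexp]
    have hia : Integrable (fun ω => 2 * A * V ω + V ω ^ 2) μ := (hVi.const_mul (2 * A)).add hV2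
    rw [integral_add (integrable_const _) hia,
      integral_add (hVi.const_mul (2 * A)) hV2, integral_const_mul, integral_const]
    simp
  have e2 : ∫ ω, (A + V ω) ∂μ = A + ∫ ω, V ω ∂μ := by
    rw [integral_add (integrable_const _) hVi, integral_const]
    simp
  rw [e1, e2]
  ring

theorem main_aux [IsProbabilityMeasure μ]
    {ι : Type*} [Fintype ι] [DecidableEq ι] (d : ι → Ω → ℝ) (c : ι → ℝ)
    (hmd : ∀ p, Measurable (d p))
    (hGd : ∀ cc : ι → ℝ, CG μ (fun ω => ∑ p, cc p * d p ω)) :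
    variance (fun ω => ∑ p, (c p + d p ω) ^ 2) μ
      = 4 * (∑ p, ∑ q, c p * c q * (∫ ω, d p ω * d q ω ∂μ))
        + 2 * (∑ p, ∑ q, (∫ ω, d p ω * d q ω ∂μ) ^ 2)
    ∧ 0 ≤ ∑ p, ∑ q, c p * c q * (∫ ω, d p ω * d q ω ∂μ) := by
  -- pairwise centered Gaussian
  have hpair : ∀ p q : ι, ∀ s t : ℝ, CG μ (fun ω => s * d p ω + t * d q ω) := by
    intro p q s t
    refine (hGd (fun r => (if r = p then s else 0) + (if r = q then t else 0))).congr
      fun ω => ?_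
    simp only [add_mul, Finset.sum_add_distrib, ite_mul, zero_mul]
    rw [Finset.sum_ite_eq' Finset.univ p (fun r => s * d r ω),
      Finset.sum_ite_eq' Finset.univ q (fun r => t * d r ω)]
    simp
  have hCGp : ∀ p, CG μ (d p) := fun p => by simpa using hpair p p 1 0
  -- basic integrability
  have hiK : ∀ p q, Integrable (fun ω => d p ω * d q ω) μ := fun p q =>
    integrable_mul_of_sq (hmd p) (hmd q) ((hCGp p).integrable_pow 2) ((hCGp q).integrable_pow 2)
  have hisq : ∀ p q, Integrable (fun ω => d p ω ^ 2 * d q ω) μ := fun p q =>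
    integrable_sq_mul (hmd p) (hmd q) ((hCGp p).integrable_pow 4) ((hCGp q).integrable_pow 2)
  have hims : ∀ p q, Integrable (fun ω => d p ω * d q ω ^ 2) μ := fun p q =>
    (integrable_sq_mul (hmd q) (hmd p) ((hCGp q).integrable_pow 4)
      ((hCGp p).integrable_pow 2)).congr (ae_of_all _ fun ω => by ring)
  have hiss : ∀ p q, Integrable (fun ω => d p ω ^ 2 * d q ω ^ 2) μ := fun p q =>
    integrable_sq_sq (hmd p) (hmd q) ((hCGp p).integrable_pow 4) ((hCGp q).integrable_pow 4)
  -- moments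
  have hm2m : ∀ p, ∫ ω, d p ω ^ 2 ∂μ = ∫ ω, d p ω * d p ω ∂μ := by
    intro p; congr 1; funext ω; ring
  have hm21 : ∀ p q, ∫ ω, d p ω ^ 2 * d q ω ∂μ = 0 := fun p q => pair_m21 (hpair p q)
  have hm12 : ∀ p q, ∫ ω, d p ω * d q ω ^ 2 ∂μ = 0 := by
    intro p q
    have h2 : ∫ ω, d p ω * d q ω ^ 2 ∂μ = ∫ ω, d q ω ^ 2 * d p ω ∂μ := by
      congr 1; funext ω; ring
    rw [h2]
    exact pair_m21 (hpair q p)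
  have hm22 : ∀ p q, ∫ ω, d p ω ^ 2 * d q ω ^ 2 ∂μ
      = (∫ ω, d p ω * d p ω ∂μ) * (∫ ω, d q ω * d q ω ∂μ)
        + 2 * (∫ ω, d p ω * d q ω ∂μ) ^ 2 := by
    intro p q
    rw [pair_m22 (hpair p q), hm2m p, hm2m q]
  -- the fluctuating part V
  have hintg : ∀ p, Integrable (fun ω => 2 * c p * d p ω + d p ω ^ 2) μ := fun p =>
    (((hCGp p).integrable).const_mul (2 * c p)).add ((hCGp p).integrable_pow 2)
  have hintV : Integrable (fun ω => ∑ p, (2 * c p * d p ω + d p ω ^ 2)) μ :=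
    integrable_finset_sum _ fun p _ => hintg p
  have hEg : ∀ p, ∫ ω, (2 * c p * d p ω + d p ω ^ 2) ∂μ = ∫ ω, d p ω * d p ω ∂μ := by
    intro p
    rw [integral_add (((hCGp p).integrable).const_mul (2 * c p)) ((hCGp p).integrable_pow 2),
      integral_const_mul, (hCGp p).m1, mul_zero, zero_add]
    exact hm2m p
  have hEV : ∫ ω, (∑ p, (2 * c p * d p ω + d p ω ^ 2)) ∂μ = ∑ p, ∫ ω, d p ω * d p ω ∂μ := by
    rw [integral_finset_sum _ fun p _ => hintg p]
    exact Finset.sum_congr rfl fun p _ => hEg p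
  -- product terms
  have hintgg : ∀ p q, Integrable
      (fun ω => (2 * c p * d p ω + d p ω ^ 2) * (2 * c q * d q ω + d q ω ^ 2)) μ := by
    intro p q
    have h1 : Integrable (fun ω => 4 * (c p * c q) * (d p ω * d q ω)
        + 2 * c p * (d p ω * d q ω ^ 2)
        + (2 * c q * (d p ω ^ 2 * d q ω) + d p ω ^ 2 * d q ω ^ 2)) μ :=
      (((hiK p q).const_mul _).add ((hims p q).const_mul _)).add
        (((hisq p q).const_mul _).add (hiss p q))
    exact h1.congr (ae_of_all _ fun ω => by ring)
  have hEgg : ∀ p q, ∫ ω, (2 * c p * d p ω + d p ω ^ 2) * (2 * c q * d q ω + d q ω ^ 2) ∂μ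
      = 4 * (c p * c q * ∫ ω, d p ω * d q ω ∂μ)
        + ((∫ ω, d p ω * d p ω ∂μ) * (∫ ω, d q ω * d q ω ∂μ)
          + 2 * (∫ ω, d p ω * d q ω ∂μ) ^ 2) := by
    intro p q
    have hexp : ∀ ω, (2 * c p * d p ω + d p ω ^ 2) * (2 * c q * d q ω + d q ω ^ 2)
        = 4 * (c p * c q) * (d p ω * d q ω) + 2 * c p * (d p ω * d q ω ^ 2)
          + (2 * c q * (d p ω ^ 2 * d q ω) + d p ω ^ 2 * d q ω ^ 2) := fun ω => by ring
    simp_rw [hexp]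
    have hA : Integrable (fun ω => 4 * (c p * c q) * (d p ω * d q ω)
        + 2 * c p * (d p ω * d q ω ^ 2)) μ :=
      ((hiK p q).const_mul _).add ((hims p q).const_mul _)
    have hB : Integrable (fun ω => 2 * c q * (d p ω ^ 2 * d q ω) + d p ω ^ 2 * d q ω ^ 2) μ :=
      ((hisq p q).const_mul _).add (hiss p q)
    rw [integral_add hA hB, integral_add ((hiK p q).const_mul _) ((hims p q).const_mul _),
      integral_add ((hisq p q).const_mul _) (hiss p q),
      integral_const_mul, integral_const_mul, integral_const_mul,
      hm12 p q, hm21 p q, hm22 p q]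
    ring
  -- V is in L²
  have hmg : ∀ p, Measurable (fun ω => 2 * c p * d p ω + d p ω ^ 2) := fun p =>
    (((hmd p).const_mul _).add ((hmd p).pow_const 2))
  have hmV : Measurable (fun ω => ∑ p, (2 * c p * d p ω + d p ω ^ 2)) :=
    Finset.measurable_sum _ fun p _ => hmg p
  have hV2exp : ∀ ω : Ω, (∑ p, (2 * c p * d p ω + d p ω ^ 2)) ^ 2
      = ∑ p, ∑ q, (2 * c p * d p ω + d p ω ^ 2) * (2 * c q * d q ω + d q ω ^ 2) := by
    intro ω
    rw [sq, Finset.sum_mul_sum]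
  have hintV2 : Integrable (fun ω => (∑ p, (2 * c p * d p ω + d p ω ^ 2)) ^ 2) μ := by
    simp_rw [hV2exp]
    exact integrable_finset_sum _ fun p _ => integrable_finset_sum _ fun q _ => hintgg p q
  have hmemV : MemLp (fun ω => ∑ p, (2 * c p * d p ω + d p ω ^ 2)) 2 μ :=
    (memLp_two_iff_integrable_sq hmV.aestronglyMeasurable).2 hintV2
  have hEV2 : ∫ ω, (∑ p, (2 * c p * d p ω + d p ω ^ 2)) ^ 2 ∂μ
      = ∑ p, ∑ q, (4 * (c p * c q * ∫ ω, d p ω * d q ω ∂μ)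
          + ((∫ ω, d p ω * d p ω ∂μ) * (∫ ω, d q ω * d q ω ∂μ)
            + 2 * (∫ ω, d p ω * d q ω ∂μ) ^ 2)) := by
    simp_rw [hV2exp]
    rw [integral_finset_sum _ fun p _ => integrable_finset_sum _ fun q _ => hintgg p q]
    refine Finset.sum_congr rfl fun p _ => ?_
    rw [integral_finset_sum _ fun q _ => hintgg p q]
    exact Finset.sum_congr rfl fun q _ => hEgg p q
  -- variance of the full sum
  have hfun : (fun ω => ∑ p, (c p + d p ω) ^ 2)
      = fun ω => (∑ p, c p ^ 2) + ∑ p, (2 * c p * d p ω + d p ω ^ 2) := by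
    funext ω
    rw [← Finset.sum_add_distrib]
    exact Finset.sum_congr rfl fun p _ => by ring
  have hvar : variance (fun ω => ∑ p, (c p + d p ω) ^ 2) μ
      = variance (fun ω => ∑ p, (2 * c p * d p ω + d p ω ^ 2)) μ := by
    rw [hfun, variance_const_add _ hmemV]
  have hvarV : variance (fun ω => ∑ p, (2 * c p * d p ω + d p ω ^ 2)) μ
      = 4 * (∑ p, ∑ q, c p * c q * (∫ ω, d p ω * d q ω ∂μ))
        + 2 * (∑ p, ∑ q, (∫ ω, d p ω * d q ω ∂μ) ^ 2) := by
    rw [variance_eq_sub hmemV]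
    simp only [Pi.pow_apply]
    rw [hEV2, hEV]
    have hsq : (∑ p, ∫ ω, d p ω * d p ω ∂μ) ^ 2
        = ∑ p, ∑ q, (∫ ω, d p ω * d p ω ∂μ) * (∫ ω, d q ω * d q ω ∂μ) := by
      rw [sq, Finset.sum_mul_sum]
    rw [hsq]
    rw [← Finset.sum_sub_distrib]
    have e : ∀ p : ι, (∑ q, (4 * (c p * c q * ∫ ω, d p ω * d q ω ∂μ)
          + ((∫ ω, d p ω * d p ω ∂μ) * (∫ ω, d q ω * d q ω ∂μ)
            + 2 * (∫ ω, d p ω * d q ω ∂μ) ^ 2)))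
          - ∑ q, (∫ ω, d p ω * d p ω ∂μ) * (∫ ω, d q ω * d q ω ∂μ)
        = 4 * (∑ q, c p * c q * ∫ ω, d p ω * d q ω ∂μ)
          + 2 * (∑ q, (∫ ω, d p ω * d q ω ∂μ) ^ 2) := by
      intro p
      rw [← Finset.sum_sub_distrib, Finset.mul_sum, Finset.mul_sum, ← Finset.sum_add_distrib]
      exact Finset.sum_congr rfl fun q _ => by ring
    rw [Finset.sum_congr rfl fun p _ => e p, Finset.sum_add_distrib,
      ← Finset.mul_sum, ← Finset.mul_sum]
  -- PSD part
  have hS1 : 0 ≤ ∑ p, ∑ q, c p * c q * (∫ ω, d p ω * d q ω ∂μ) := by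
    have hintpq : ∀ p q : ι, Integrable (fun ω => c p * d p ω * (c q * d q ω)) μ := by
      intro p q
      exact ((hiK p q).const_mul (c p * c q)).congr (ae_of_all _ fun ω => by ring)
    have hsqe : ∫ ω, (∑ p, c p * d p ω) ^ 2 ∂μ
        = ∑ p, ∑ q, c p * c q * (∫ ω, d p ω * d q ω ∂μ) := by
      have hexp : ∀ ω : Ω, (∑ p, c p * d p ω) ^ 2
          = ∑ p, ∑ q, c p * d p ω * (c q * d q ω) := by
        intro ω; rw [sq, Finset.sum_mul_sum]
      simp_rw [hexp]
      rw [integral_finset_sum _ fun p _ => integrable_finset_sum _ fun q _ => hintpq p q]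
      refine Finset.sum_congr rfl fun p _ => ?_
      rw [integral_finset_sum _ fun q _ => hintpq p q]
      refine Finset.sum_congr rfl fun q _ => ?_
      have h3 : (fun ω => c p * d p ω * (c q * d q ω))
          = fun ω => (c p * c q) * (d p ω * d q ω) := funext fun ω => by ring
      rw [h3, integral_const_mul, mul_assoc]
    rw [← hsqe]
    exact integral_nonneg fun ω => sq_nonneg _
  exact ⟨hvar.trans hvarV, hS1⟩

end NoisyPatchAux

/-- Variance lower bound for the noisy-patch distance estimator:
`var[δ_y] ≥ (8/n²) σ_z⁴ ρ` with
`ρ = (1/n²) Σ_{i₁,j₁,i₂,j₂} (R(i₁-j₁, i₂-j₂)/σ_z²)²`, with equality when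
`x⁽¹⁾ = x⁽²⁾`. -/
theorem noisy_patch_distance_variance_bound
    {Ω : Type*} [MeasurableSpace Ω] (μ : Measure Ω) [IsProbabilityMeasure μ]
    (n : ℕ) (hn : 0 < n)
    (z1 z2 : Fin n × Fin n → Ω → ℝ) (x1 x2 : Fin n × Fin n → ℝ) (R : ℤ → ℤ → ℝ)
    (hm1 : ∀ p, Measurable (z1 p)) (hm2 : ∀ p, Measurable (z2 p))
    (hGauss : IsCenteredGaussianFamily μ (Sum.elim z1 z2))
    (hindep : IndepFun (fun ω (p : Fin n × Fin n) => z1 p ω)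
      (fun ω (p : Fin n × Fin n) => z2 p ω) μ)
    (hcov1 : ∀ a b : Fin n × Fin n,
      (∫ ω, z1 a ω * z1 b ω ∂μ) = R (((a.1 : ℕ) : ℤ) - ((b.1 : ℕ) : ℤ))
        (((a.2 : ℕ) : ℤ) - ((b.2 : ℕ) : ℤ)))
    (hcov2 : ∀ a b : Fin n × Fin n,
      (∫ ω, z2 a ω * z2 b ω ∂μ) = R (((a.1 : ℕ) : ℤ) - ((b.1 : ℕ) : ℤ))
        (((a.2 : ℕ) : ℤ) - ((b.2 : ℕ) : ℤ))) :
    variance (fun ω => (1 / (n : ℝ) ^ 2) *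
        ∑ p : Fin n × Fin n, ((x2 p + z2 p ω) - (x1 p + z1 p ω)) ^ 2) μ
      ≥ (8 / (n : ℝ) ^ 2) * (R 0 0) ^ 2 *
          ((1 / (n : ℝ) ^ 2) * ∑ i₁ : Fin n, ∑ j₁ : Fin n, ∑ i₂ : Fin n, ∑ j₂ : Fin n,
            (R (((i₁ : ℕ) : ℤ) - ((j₁ : ℕ) : ℤ)) (((i₂ : ℕ) : ℤ) - ((j₂ : ℕ) : ℤ))
              / R 0 0) ^ 2)
    ∧ (x1 = x2 →
        variance (fun ω => (1 / (n : ℝ) ^ 2) *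
            ∑ p : Fin n × Fin n, ((x2 p + z2 p ω) - (x1 p + z1 p ω)) ^ 2) μ
          = (8 / (n : ℝ) ^ 2) * (R 0 0) ^ 2 *
              ((1 / (n : ℝ) ^ 2) * ∑ i₁ : Fin n, ∑ j₁ : Fin n, ∑ i₂ : Fin n, ∑ j₂ : Fin n,
                (R (((i₁ : ℕ) : ℤ) - ((j₁ : ℕ) : ℤ)) (((i₂ : ℕ) : ℤ) - ((j₂ : ℕ) : ℤ))
                  / R 0 0) ^ 2)) := by
  classical
  -- measurability of the difference field
  have hmd : ∀ p : (Fin n × Fin n), Measurable (fun ω => z2 p ω - z1 p ω) := fun p => (hm2 p).sub (hm1 p)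
  -- the difference field is a centered Gaussian family
  have hGd : ∀ cc : (Fin n × Fin n) → ℝ, NoisyPatchAux.CG μ (fun ω => ∑ p : (Fin n × Fin n), cc p * (z2 p ω - z1 p ω)) := by
    intro cc
    obtain ⟨v, hv⟩ := hGauss Finset.univ (Sum.elim (fun p => -cc p) cc)
    refine ⟨Finset.measurable_sum _ fun p _ => ((hm2 p).sub (hm1 p)).const_mul (cc p), v, ?_⟩
    rw [← hv]
    congr 1
    funext ω
    rw [Fintype.sum_sum_type]
    simp only [Sum.elim_inl, Sum.elim_inr]
    rw [← Finset.sum_add_distrib]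
    exact Finset.sum_congr rfl fun p _ => by ring
  -- each z is centered Gaussian
  have hCGzsum : ∀ i : (Fin n × Fin n) ⊕ (Fin n × Fin n), NoisyPatchAux.CG μ (Sum.elim z1 z2 i) := by
    intro i
    obtain ⟨v, hv⟩ := hGauss Finset.univ (fun j => if j = i then 1 else 0)
    refine ⟨?_, v, ?_⟩
    · cases i with
      | inl p => exact hm1 p
      | inr p => exact hm2 p
    · rw [← hv]
      congr 1
      funext ω
      symm
      simp [ite_mul]
  have hCG1 : ∀ p : (Fin n × Fin n), NoisyPatchAux.CG μ (z1 p) := fun p => hCGzsum (Sum.inl p)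
  have hCG2 : ∀ p : (Fin n × Fin n), NoisyPatchAux.CG μ (z2 p) := fun p => hCGzsum (Sum.inr p)
  -- cross moments vanish by independence
  have hcross12 : ∀ a b : (Fin n × Fin n), ∫ ω, z1 a ω * z2 b ω ∂μ = 0 := by
    intro a b
    have hI : IndepFun (z1 a) (z2 b) μ :=
      hindep.comp (measurable_pi_apply a) (measurable_pi_apply b)
    have h2 : ∫ ω, z1 a ω * z2 b ω ∂μ = (∫ ω, z1 a ω ∂μ) * ∫ ω, z2 b ω ∂μ :=
      IndepFun.integral_fun_mul_eq_mul_integral hI (hCG1 a).integrable.aestronglyMeasurable (hCG2 b).integrable.aestronglyMeasurable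
    rw [h2, (hCG1 a).m1, zero_mul]
  have hcross21 : ∀ a b : (Fin n × Fin n), ∫ ω, z2 a ω * z1 b ω ∂μ = 0 := by
    intro a b
    have hI : IndepFun (z2 a) (z1 b) μ :=
      (hindep.comp (measurable_pi_apply b) (measurable_pi_apply a)).symm
    have h2 : ∫ ω, z2 a ω * z1 b ω ∂μ = (∫ ω, z2 a ω ∂μ) * ∫ ω, z1 b ω ∂μ :=
      IndepFun.integral_fun_mul_eq_mul_integral hI (hCG2 a).integrable.aestronglyMeasurable (hCG1 b).integrable.aestronglyMeasurable
    rw [h2, (hCG2 a).m1, zero_mul]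
  -- covariance of the difference field
  have hKval : ∀ p q : (Fin n × Fin n), ∫ ω, (z2 p ω - z1 p ω) * (z2 q ω - z1 q ω) ∂μ
      = 2 * R (((p.1 : ℕ) : ℤ) - ((q.1 : ℕ) : ℤ)) (((p.2 : ℕ) : ℤ) - ((q.2 : ℕ) : ℤ)) := by
    intro p q
    have hi22 : Integrable (fun ω => z2 p ω * z2 q ω) μ :=
      NoisyPatchAux.integrable_mul_of_sq (hm2 p) (hm2 q)
        ((hCG2 p).integrable_pow 2) ((hCG2 q).integrable_pow 2)
    have hi21 : Integrable (fun ω => z2 p ω * z1 q ω) μ :=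
      NoisyPatchAux.integrable_mul_of_sq (hm2 p) (hm1 q)
        ((hCG2 p).integrable_pow 2) ((hCG1 q).integrable_pow 2)
    have hi12 : Integrable (fun ω => z1 p ω * z2 q ω) μ :=
      NoisyPatchAux.integrable_mul_of_sq (hm1 p) (hm2 q)
        ((hCG1 p).integrable_pow 2) ((hCG2 q).integrable_pow 2)
    have hi11 : Integrable (fun ω => z1 p ω * z1 q ω) μ :=
      NoisyPatchAux.integrable_mul_of_sq (hm1 p) (hm1 q)
        ((hCG1 p).integrable_pow 2) ((hCG1 q).integrable_pow 2)
    have hexp : ∀ ω, (z2 p ω - z1 p ω) * (z2 q ω - z1 q ω)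
        = (z2 p ω * z2 q ω - z2 p ω * z1 q ω) - (z1 p ω * z2 q ω - z1 p ω * z1 q ω) :=
      fun ω => by ring
    simp_rw [hexp]
    have hA : Integrable (fun ω => z2 p ω * z2 q ω - z2 p ω * z1 q ω) μ := hi22.sub hi21
    have hB : Integrable (fun ω => z1 p ω * z2 q ω - z1 p ω * z1 q ω) μ := hi12.sub hi11
    rw [integral_sub hA hB, integral_sub hi22 hi21,
      integral_sub hi12 hi11, hcov2 p q, hcross21 p q, hcross12 p q, hcov1 p q]
    ring
  -- apply the abstract variance formula
  have haux := NoisyPatchAux.main_aux (μ := μ) (ι := Fin n × Fin n)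
    (fun p ω => z2 p ω - z1 p ω) (fun p => x2 p - x1 p) hmd hGd
  have hvar1 : variance (fun ω => ∑ p : (Fin n × Fin n), ((x2 p - x1 p) + (z2 p ω - z1 p ω)) ^ 2) μ
      = 4 * (∑ p : (Fin n × Fin n), ∑ q : (Fin n × Fin n), (x2 p - x1 p) * (x2 q - x1 q) *
          (∫ ω, (z2 p ω - z1 p ω) * (z2 q ω - z1 q ω) ∂μ))
        + 2 * (∑ p : (Fin n × Fin n), ∑ q : (Fin n × Fin n), (∫ ω, (z2 p ω - z1 p ω) * (z2 q ω - z1 q ω) ∂μ) ^ 2) :=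
    haux.1
  have hS1 : 0 ≤ ∑ p : (Fin n × Fin n), ∑ q : (Fin n × Fin n), (x2 p - x1 p) * (x2 q - x1 q) *
      (∫ ω, (z2 p ω - z1 p ω) * (z2 q ω - z1 q ω) ∂μ) := haux.2
  -- rewrite the estimator
  have hfun : (fun ω => (1 / (n : ℝ) ^ 2) *
        ∑ p : (Fin n × Fin n), ((x2 p + z2 p ω) - (x1 p + z1 p ω)) ^ 2)
      = fun ω => (1 / (n : ℝ) ^ 2) *
        ∑ p : (Fin n × Fin n), ((x2 p - x1 p) + (z2 p ω - z1 p ω)) ^ 2 := by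
    funext ω
    congr 1
    exact Finset.sum_congr rfl fun p _ => by ring
  -- T: the double sum of squared covariances
  set T := ∑ p : (Fin n × Fin n), ∑ q : (Fin n × Fin n),
    (R (((p.1 : ℕ) : ℤ) - ((q.1 : ℕ) : ℤ)) (((p.2 : ℕ) : ℤ) - ((q.2 : ℕ) : ℤ))) ^ 2 with hT
  have hS2T : (∑ p : (Fin n × Fin n), ∑ q : (Fin n × Fin n), (∫ ω, (z2 p ω - z1 p ω) * (z2 q ω - z1 q ω) ∂μ) ^ 2)
      = 4 * T := by
    have h1 : (∑ p : (Fin n × Fin n), ∑ q : (Fin n × Fin n), (∫ ω, (z2 p ω - z1 p ω) * (z2 q ω - z1 q ω) ∂μ) ^ 2)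
        = ∑ p : (Fin n × Fin n), ∑ q : (Fin n × Fin n), 4 *
          (R (((p.1 : ℕ) : ℤ) - ((q.1 : ℕ) : ℤ)) (((p.2 : ℕ) : ℤ) - ((q.2 : ℕ) : ℤ))) ^ 2 :=
      Finset.sum_congr rfl fun p _ => Finset.sum_congr rfl fun q _ => by
        rw [hKval p q]; ring
    rw [h1, hT]
    simp_rw [Finset.mul_sum]
  -- reindex T as a quadruple sum
  have hT4 : T = ∑ i₁ : Fin n, ∑ j₁ : Fin n, ∑ i₂ : Fin n, ∑ j₂ : Fin n,
      (R (((i₁ : ℕ) : ℤ) - ((j₁ : ℕ) : ℤ)) (((i₂ : ℕ) : ℤ) - ((j₂ : ℕ) : ℤ))) ^ 2 := by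
    rw [hT, Fintype.sum_prod_type]
    refine Finset.sum_congr rfl fun i₁ _ => ?_
    have h2 : ∀ i₂ : Fin n, (∑ q : (Fin n × Fin n), (R (((i₁ : ℕ) : ℤ) - ((q.1 : ℕ) : ℤ))
          (((i₂ : ℕ) : ℤ) - ((q.2 : ℕ) : ℤ))) ^ 2)
        = ∑ j₁ : Fin n, ∑ j₂ : Fin n, (R (((i₁ : ℕ) : ℤ) - ((j₁ : ℕ) : ℤ))
          (((i₂ : ℕ) : ℤ) - ((j₂ : ℕ) : ℤ))) ^ 2 := fun i₂ => Fintype.sum_prod_type _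
    calc (∑ i₂ : Fin n, ∑ q : (Fin n × Fin n), (R (((i₁ : ℕ) : ℤ) - ((q.1 : ℕ) : ℤ))
          (((i₂ : ℕ) : ℤ) - ((q.2 : ℕ) : ℤ))) ^ 2)
        = ∑ i₂ : Fin n, ∑ j₁ : Fin n, ∑ j₂ : Fin n, (R (((i₁ : ℕ) : ℤ) - ((j₁ : ℕ) : ℤ))
            (((i₂ : ℕ) : ℤ) - ((j₂ : ℕ) : ℤ))) ^ 2 := Finset.sum_congr rfl fun i₂ _ => h2 i₂
      _ = ∑ j₁ : Fin n, ∑ i₂ : Fin n, ∑ j₂ : Fin n, (R (((i₁ : ℕ) : ℤ) - ((j₁ : ℕ) : ℤ))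
            (((i₂ : ℕ) : ℤ) - ((j₂ : ℕ) : ℤ))) ^ 2 := Finset.sum_comm
  -- when R 0 0 = 0 all relevant covariances vanish
  have hRvanish : R 0 0 = 0 → ∀ p q : (Fin n × Fin n),
      R (((p.1 : ℕ) : ℤ) - ((q.1 : ℕ) : ℤ)) (((p.2 : ℕ) : ℤ) - ((q.2 : ℕ) : ℤ)) = 0 := by
    intro hR0 p q
    rw [← hcov1 p q]
    have hpp : ∫ ω, z1 p ω * z1 p ω ∂μ = 0 := by
      rw [hcov1 p p, sub_self, sub_self, hR0]
    have hnn : (0 : Ω → ℝ) ≤ fun ω => z1 p ω * z1 p ω := fun ω => mul_self_nonneg _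
    have hi : Integrable (fun ω => z1 p ω * z1 p ω) μ :=
      NoisyPatchAux.integrable_mul_of_sq (hm1 p) (hm1 p)
        ((hCG1 p).integrable_pow 2) ((hCG1 p).integrable_pow 2)
    have hae : (fun ω => z1 p ω * z1 p ω) =ᵐ[μ] 0 :=
      (integral_eq_zero_iff_of_nonneg hnn hi).1 hpp
    have hae1 : z1 p =ᵐ[μ] 0 := by
      filter_upwards [hae] with ω hω
      exact mul_self_eq_zero.1 hω
    have : (fun ω => z1 p ω * z1 q ω) =ᵐ[μ] 0 := by
      filter_upwards [hae1] with ω hω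
      simp [hω]
    rw [integral_congr_ae this]
    simp
  -- the RHS equals (1/n²)² * (8T)
  have hRHS : (8 / (n : ℝ) ^ 2) * (R 0 0) ^ 2 *
        ((1 / (n : ℝ) ^ 2) * ∑ i₁ : Fin n, ∑ j₁ : Fin n, ∑ i₂ : Fin n, ∑ j₂ : Fin n,
          (R (((i₁ : ℕ) : ℤ) - ((j₁ : ℕ) : ℤ)) (((i₂ : ℕ) : ℤ) - ((j₂ : ℕ) : ℤ))
            / R 0 0) ^ 2)
      = (1 / (n : ℝ) ^ 2) ^ 2 * (8 * T) := by
    have hQ : (R 0 0) ^ 2 * (∑ i₁ : Fin n, ∑ j₁ : Fin n, ∑ i₂ : Fin n, ∑ j₂ : Fin n,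
        (R (((i₁ : ℕ) : ℤ) - ((j₁ : ℕ) : ℤ)) (((i₂ : ℕ) : ℤ) - ((j₂ : ℕ) : ℤ))
          / R 0 0) ^ 2) = T := by
      rw [hT4]
      simp_rw [Finset.mul_sum]
      refine Finset.sum_congr rfl fun i₁ _ => Finset.sum_congr rfl fun j₁ _ =>
        Finset.sum_congr rfl fun i₂ _ => Finset.sum_congr rfl fun j₂ _ => ?_
      by_cases hR0 : R 0 0 = 0
      · rw [hRvanish hR0 (i₁, i₂) (j₁, j₂)]
        simp
      · field_simp
    calc (8 / (n : ℝ) ^ 2) * (R 0 0) ^ 2 *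
          ((1 / (n : ℝ) ^ 2) * ∑ i₁ : Fin n, ∑ j₁ : Fin n, ∑ i₂ : Fin n, ∑ j₂ : Fin n,
            (R (((i₁ : ℕ) : ℤ) - ((j₁ : ℕ) : ℤ)) (((i₂ : ℕ) : ℤ) - ((j₂ : ℕ) : ℤ))
              / R 0 0) ^ 2)
        = (1 / (n : ℝ) ^ 2) ^ 2 * (8 * ((R 0 0) ^ 2 *
            (∑ i₁ : Fin n, ∑ j₁ : Fin n, ∑ i₂ : Fin n, ∑ j₂ : Fin n,
              (R (((i₁ : ℕ) : ℤ) - ((j₁ : ℕ) : ℤ)) (((i₂ : ℕ) : ℤ) - ((j₂ : ℕ) : ℤ))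
                / R 0 0) ^ 2))) := by ring
      _ = (1 / (n : ℝ) ^ 2) ^ 2 * (8 * T) := by rw [hQ]
  constructor
  · rw [hfun, variance_const_mul, hvar1, hRHS, hS2T]
    nlinarith [mul_nonneg (sq_nonneg (1 / (n : ℝ) ^ 2)) hS1]
  · intro hx
    have hS1z : (∑ p : (Fin n × Fin n), ∑ q : (Fin n × Fin n), (x2 p - x1 p) * (x2 q - x1 q) *
        (∫ ω, (z2 p ω - z1 p ω) * (z2 q ω - z1 q ω) ∂μ)) = 0 := by
      subst hx
      refine Finset.sum_eq_zero fun p _ => Finset.sum_eq_zero fun q _ => by simp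
    rw [hfun, variance_const_mul, hvar1, hRHS, hS2T, hS1z]
    ring
end

section
/- Suppose the noise autocovariance has separable bilinear decay: R_ZZ(τ₁, τ₂) = g(τ₁)g(τ₂) with g(τ) = σ_z · max{1 − |τ|/θ, 0} for some θ ≥ 1. Then ρ = (1/(n²σ_z⁴))·(Σ_{i,j=1}^n g²(i − j))² satisfies ρ ≥ (1/4)(r + 1/r)², where r = min{n, ⌊θ⌋}; equality holds when θ = n and when θ = 1. -/
open Finset

lemma sum_sq' (k : ℕ) : ∑ j ∈ range k, ((j:ℝ)+1)^2 = (k:ℝ)*((k:ℝ)+1)*(2*(k:ℝ)+1)/6 := by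
  induction k with
  | zero => simp
  | succ k ih => rw [sum_range_succ, ih]; push_cast; ring

lemma sum_cube' (k : ℕ) : ∑ j ∈ range k, ((j:ℝ)+1)^3 = (k:ℝ)^2*((k:ℝ)+1)^2/4 := by
  induction k with
  | zero => simp
  | succ k ih => rw [sum_range_succ, ih]; push_cast; ring

lemma rev' (k : ℕ) (g : ℝ → ℝ) : ∑ s ∈ range k, g ((k:ℝ)-1-s) = ∑ s ∈ range k, g s := by
  rw [← Finset.sum_range_reflect (fun j => g j) k]
  refine sum_congr rfl fun j hj => ?_
  have hj' := mem_range.mp hj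
  congr 1
  rw [Nat.cast_sub (by omega : j ≤ k - 1), Nat.cast_sub (by omega : 1 ≤ k), Nat.cast_one]

lemma icc_to_range (n : ℕ) (g : ℤ → ℝ) : ∑ i ∈ Icc (1:ℤ) n, g i = ∑ s ∈ range n, g (s+1) := by
  induction n with
  | zero => simp
  | succ n ih =>
      have h : Finset.Icc (1:ℤ) (n+1) = insert ((n:ℤ)+1) (Finset.Icc (1:ℤ) n) := by
        ext x; simp [Finset.mem_Icc, Finset.mem_insert]; omega
      rw [Nat.cast_succ, h, Finset.sum_insert (by simp), sum_range_succ, ih]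
      ring

lemma lag' (f : ℤ → ℝ) (hf : ∀ τ, f (-τ) = f τ) (n : ℕ) :
    ∑ s ∈ range n, ∑ t ∈ range n, f ((s:ℤ) - t)
      = n * f 0 + 2 * ∑ s ∈ range (n-1), ((n:ℝ)-1-s) * f ((s:ℤ)+1) := by
  induction n with
  | zero => simp
  | succ n ih =>
      rcases Nat.eq_zero_or_pos n with h0 | hpos
      · subst h0; simp
      -- split off last row and column
      have hsplit : ∑ s ∈ range (n+1), ∑ t ∈ range (n+1), f ((s:ℤ) - t)
          = (∑ s ∈ range n, ∑ t ∈ range n, f ((s:ℤ) - t))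
            + (∑ s ∈ range n, f ((s:ℤ) - n)) + ∑ t ∈ range (n+1), f ((n:ℤ) - t) := by
        rw [sum_range_succ]
        congr 1
        rw [← sum_add_distrib]
        refine sum_congr rfl fun s hs => ?_
        rw [sum_range_succ]
      have hrefl : ∀ m : ℕ, ∑ t ∈ range m, f ((m:ℤ) - t) = ∑ t ∈ range m, f ((t:ℤ)+1) := by
        intro m
        rw [← Finset.sum_range_reflect (fun j => f ((j:ℤ)+1)) m]
        refine sum_congr rfl fun t ht => ?_
        have := mem_range.mp ht
        congr 1
        omega
      have hneg : ∑ s ∈ range n, f ((s:ℤ) - n) = ∑ s ∈ range n, f ((s:ℤ)+1) := by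
        rw [← hrefl n]
        refine sum_congr rfl fun s hs => ?_
        rw [← hf]; congr 1; ring
      have hlast : ∑ t ∈ range (n+1), f ((n:ℤ) - t) = f 0 + ∑ t ∈ range n, f ((t:ℤ)+1) := by
        rw [sum_range_succ, hrefl n]
        simp [add_comm]
      rw [hsplit, ih, hneg, hlast]
      have hcast : ((n-1:ℕ):ℝ) = (n:ℝ) - 1 := by
        rw [Nat.cast_sub (by omega : 1 ≤ n), Nat.cast_one]
      have hkey : ∑ s ∈ range n, (((n:ℕ):ℝ)+1-1-(s:ℕ)) * f ((s:ℤ)+1)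
          = (∑ s ∈ range (n-1), ((n:ℝ)-1-s) * f ((s:ℤ)+1)) + ∑ s ∈ range n, f ((s:ℤ)+1) := by
        have h1 : ∑ s ∈ range n, (((n:ℕ):ℝ)+1-1-(s:ℕ)) * f ((s:ℤ)+1)
            = ∑ s ∈ range n, (((n:ℝ)-1-s) * f ((s:ℤ)+1) + f ((s:ℤ)+1)) := by
          refine sum_congr rfl fun s hs => ?_; ring
        rw [h1, sum_add_distrib]
        congr 1
        have h2 : n = (n-1)+1 := by omega
        rw [h2, sum_range_succ, hcast]
        simp [hcast]
      push_cast
      push_cast at hkey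
      rw [hkey]
      ring

lemma sum_formula (n m : ℕ) (hm : 1 ≤ m) (hmn : m ≤ n) :
    ∑ s ∈ range (n-1), ((n:ℝ)-1-s) * (max (1 - ((s:ℝ)+1)/(m:ℝ)) 0)^2
      = (((n:ℝ)-m)*(((m:ℝ)-1)*m*(2*m-1)/6) + ((m:ℝ)-1)^2*(m:ℝ)^2/4) / (m:ℝ)^2 := by
  have hm0 : (0:ℝ) < m := by exact_mod_cast hm
  have hcast : ((m-1:ℕ):ℝ) = (m:ℝ) - 1 := by
    rw [Nat.cast_sub (by omega : 1 ≤ m), Nat.cast_one]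
  have hsub : range (m-1) ⊆ range (n-1) := by
    apply range_subset_range.mpr; omega
  have hzero : ∀ s ∈ range (n-1), s ∉ range (m-1) →
      ((n:ℝ)-1-s) * (max (1 - ((s:ℝ)+1)/(m:ℝ)) 0)^2 = 0 := by
    intro s hs hs'
    have hsm : m ≤ s + 1 := by
      simp only [mem_range] at hs hs'; omega
    have : max (1 - ((s:ℝ)+1)/(m:ℝ)) 0 = 0 := by
      apply max_eq_right
      have : (1:ℝ) ≤ ((s:ℝ)+1)/m := by
        rw [le_div_iff₀ hm0]; push_cast; exact_mod_cast by linarith [hsm] ;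
      linarith
    rw [this]; ring
  rw [← Finset.sum_subset hsub hzero]
  have hstep : ∀ s ∈ range (m-1),
      ((n:ℝ)-1-s) * (max (1 - ((s:ℝ)+1)/(m:ℝ)) 0)^2
        = (fun y => ((n:ℝ)-m+1+y) * ((y+1)/m)^2) (((m-1:ℕ):ℝ)-1-s) := by
    intro s hs
    have hsm : s + 1 < m := by simp only [mem_range] at hs; omega
    have hmax : max (1 - ((s:ℝ)+1)/(m:ℝ)) 0 = 1 - ((s:ℝ)+1)/(m:ℝ) := by
      apply max_eq_left
      have : ((s:ℝ)+1)/m ≤ 1 := by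
        rw [div_le_one hm0]; exact_mod_cast hsm.le
      linarith
    rw [hmax, hcast]
    have hsm' : (s:ℝ) + 1 ≤ (m:ℝ) := by exact_mod_cast hsm.le
    field_simp
    ring
  rw [Finset.sum_congr rfl hstep, rev' (m-1) (fun y => ((n:ℝ)-m+1+y) * ((y+1)/m)^2)]
  have hexp : ∀ s ∈ range (m-1),
      (fun y => ((n:ℝ)-m+1+y) * ((y+1)/m)^2) (s:ℝ)
        = ((n:ℝ)-m)/(m:ℝ)^2 * ((s:ℝ)+1)^2 + (1/(m:ℝ)^2) * ((s:ℝ)+1)^3 := by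
    intro s hs; simp only; field_simp; ring
  rw [Finset.sum_congr rfl hexp, sum_add_distrib, ← mul_sum, ← mul_sum, sum_sq', sum_cube',
    hcast]
  field_simp
  ring

lemma Tval (n : ℕ) (θ : ℝ) :
    ∑ i ∈ Icc (1:ℤ) (n:ℤ), ∑ j ∈ Icc (1:ℤ) (n:ℤ), (max (1 - |((i - j : ℤ) : ℝ)| / θ) 0)^2
      = (n:ℝ) + 2 * ∑ s ∈ range (n-1), ((n:ℝ)-1-s) * (max (1 - ((s:ℝ)+1)/θ) 0)^2 := by
  set f : ℤ → ℝ := fun τ => (max (1 - |(τ:ℝ)| / θ) 0)^2 with hfdef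
  have hf : ∀ τ : ℤ, f (-τ) = f τ := by
    intro τ; simp only [hfdef]; push_cast; rw [abs_neg]
  have h1 : ∑ i ∈ Icc (1:ℤ) (n:ℤ), ∑ j ∈ Icc (1:ℤ) (n:ℤ), (max (1 - |((i - j : ℤ) : ℝ)| / θ) 0)^2
      = ∑ s ∈ range n, ∑ t ∈ range n, f ((s:ℤ) - t) := by
    rw [icc_to_range n (fun i => ∑ j ∈ Icc (1:ℤ) (n:ℤ), f (i - j))]
    refine sum_congr rfl fun s _ => ?_
    rw [icc_to_range n (fun j => f ((s:ℤ)+1 - j))]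
    refine sum_congr rfl fun t _ => ?_
    congr 1; ring
  rw [h1, lag' f hf n]
  have hf0 : f 0 = 1 := by simp [hfdef]
  have hfs : ∀ s ∈ range (n-1), ((n:ℝ)-1-s) * f ((s:ℤ)+1)
      = ((n:ℝ)-1-s) * (max (1 - ((s:ℝ)+1)/θ) 0)^2 := by
    intro s _
    congr 2
    simp only [hfdef]
    congr 2
    push_cast
    rw [abs_of_nonneg (by positivity)]
  rw [Finset.sum_congr rfl hfs, hf0]
  ring

lemma Tmono (n : ℕ) (θ₁ θ₂ : ℝ) (h1 : 0 < θ₁) (h12 : θ₁ ≤ θ₂) :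
    ∑ i ∈ Icc (1:ℤ) (n:ℤ), ∑ j ∈ Icc (1:ℤ) (n:ℤ), (max (1 - |((i - j : ℤ) : ℝ)| / θ₁) 0)^2
      ≤ ∑ i ∈ Icc (1:ℤ) (n:ℤ), ∑ j ∈ Icc (1:ℤ) (n:ℤ), (max (1 - |((i - j : ℤ) : ℝ)| / θ₂) 0)^2 := by
  refine sum_le_sum fun i _ => sum_le_sum fun j _ => ?_
  have h2 : (0:ℝ) < θ₂ := lt_of_lt_of_le h1 h12
  apply pow_le_pow_left₀ (le_max_right _ 0)
  apply max_le_max _ le_rfl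
  have : |((i - j : ℤ) : ℝ)| / θ₂ ≤ |((i - j : ℤ) : ℝ)| / θ₁ := by
    gcongr
  linarith

lemma Tn_val (n : ℕ) (hn : 1 ≤ n) :
    ∑ i ∈ Icc (1:ℤ) (n:ℤ), ∑ j ∈ Icc (1:ℤ) (n:ℤ), (max (1 - |((i - j : ℤ) : ℝ)| / (n:ℝ)) 0)^2
      = ((n:ℝ)^2+1)/2 := by
  have hn0 : (0:ℝ) < n := by exact_mod_cast hn
  rw [Tval, sum_formula n n hn le_rfl]
  field_simp
  ring

lemma Tm_bound (n m : ℕ) (hm : 1 ≤ m) (hmn : m < n) :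
    (n:ℝ)/2 * ((m:ℝ) + 1/(m:ℝ))
      ≤ ∑ i ∈ Icc (1:ℤ) (n:ℤ), ∑ j ∈ Icc (1:ℤ) (n:ℤ),
          (max (1 - |((i - j : ℤ) : ℝ)| / (m:ℝ)) 0)^2 := by
  have hm0 : (0:ℝ) < m := by exact_mod_cast hm
  have hm1 : (1:ℝ) ≤ m := by exact_mod_cast hm
  have hnm : (m:ℝ) + 1 ≤ n := by exact_mod_cast hmn
  rw [Tval, sum_formula n m hm hmn.le]
  have hident : (n:ℝ) + 2*((((n:ℝ)-m)*(((m:ℝ)-1)*m*(2*m-1)/6) + ((m:ℝ)-1)^2*(m:ℝ)^2/4) / (m:ℝ)^2)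
      - (n:ℝ)/2 * ((m:ℝ) + 1/(m:ℝ)) = ((n:ℝ)-m)*((m:ℝ)^2-1)/(6*m) := by
    field_simp
    ring
  have h2 : (0:ℝ) ≤ ((n:ℝ)-m)*((m:ℝ)^2-1)/(6*m) :=
    div_nonneg (mul_nonneg (by linarith) (by nlinarith)) (by positivity)
  linarith

/-- For the separable bilinearly decaying autocovariance
`R_ZZ(τ₁,τ₂) = g(τ₁)g(τ₂)`, `g(τ) = σ_z · max{1 - |τ|/θ, 0}`,
the quantity `ρ = (1/(n²σ_z⁴)) (Σ_{i,j=1}^n g²(i-j))²` satisfies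
`ρ ≥ (1/4)(r + 1/r)²` with `r = min{n, ⌊θ⌋}`, with equality when `θ = n`
and when `θ = 1`. -/
theorem rho_lower_bound (n : ℕ) (hn : 1 ≤ n) (σz θ : ℝ) (hσ : 0 < σz) (hθ : 1 ≤ θ) :
    ((1 / ((n : ℝ) ^ 2 * σz ^ 4)) *
        (∑ i ∈ Finset.Icc (1 : ℤ) n, ∑ j ∈ Finset.Icc (1 : ℤ) n,
          (σz * max (1 - |((i - j : ℤ) : ℝ)| / θ) 0) ^ 2) ^ 2
      ≥ (1 / 4) * ((min n (Nat.floor θ) : ℝ) + 1 / (min n (Nat.floor θ) : ℝ)) ^ 2)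
    ∧ (θ = n →
        (1 / ((n : ℝ) ^ 2 * σz ^ 4)) *
            (∑ i ∈ Finset.Icc (1 : ℤ) n, ∑ j ∈ Finset.Icc (1 : ℤ) n,
              (σz * max (1 - |((i - j : ℤ) : ℝ)| / θ) 0) ^ 2) ^ 2
          = (1 / 4) * ((min n (Nat.floor θ) : ℝ) + 1 / (min n (Nat.floor θ) : ℝ)) ^ 2)
    ∧ (θ = 1 →
        (1 / ((n : ℝ) ^ 2 * σz ^ 4)) *
            (∑ i ∈ Finset.Icc (1 : ℤ) n, ∑ j ∈ Finset.Icc (1 : ℤ) n,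
              (σz * max (1 - |((i - j : ℤ) : ℝ)| / θ) 0) ^ 2) ^ 2
          = (1 / 4) * ((min n (Nat.floor θ) : ℝ) + 1 / (min n (Nat.floor θ) : ℝ)) ^ 2) := by
  have hn0 : (0:ℝ) < n := by exact_mod_cast hn
  have hσ' : σz ≠ 0 := ne_of_gt hσ
  have hfactor : ∀ θ' : ℝ,
      (∑ i ∈ Finset.Icc (1 : ℤ) (n:ℤ), ∑ j ∈ Finset.Icc (1 : ℤ) (n:ℤ),
        (σz * max (1 - |((i - j : ℤ) : ℝ)| / θ') 0) ^ 2)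
      = σz^2 * ∑ i ∈ Finset.Icc (1 : ℤ) (n:ℤ), ∑ j ∈ Finset.Icc (1 : ℤ) (n:ℤ),
          (max (1 - |((i - j : ℤ) : ℝ)| / θ') 0) ^ 2 := by
    intro θ'
    rw [mul_sum]
    refine sum_congr rfl fun i _ => ?_
    rw [mul_sum]
    refine sum_congr rfl fun j _ => ?_
    ring
  have hred : ∀ θ' A : ℝ,
      (∑ i ∈ Finset.Icc (1 : ℤ) (n:ℤ), ∑ j ∈ Finset.Icc (1 : ℤ) (n:ℤ),
        (max (1 - |((i - j : ℤ) : ℝ)| / θ') 0) ^ 2) = A →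
      (1 / ((n : ℝ) ^ 2 * σz ^ 4)) *
        (∑ i ∈ Finset.Icc (1 : ℤ) (n:ℤ), ∑ j ∈ Finset.Icc (1 : ℤ) (n:ℤ),
          (σz * max (1 - |((i - j : ℤ) : ℝ)| / θ') 0) ^ 2) ^ 2 = A^2/(n:ℝ)^2 := by
    intro θ' A hA
    rw [hfactor θ', hA]
    field_simp
  refine ⟨?_, ?_, ?_⟩
  · -- main inequality
    set m := Nat.floor θ with hmdef
    have hm1 : 1 ≤ m := Nat.le_floor (by exact_mod_cast hθ)
    have hθm : (m:ℝ) ≤ θ := Nat.floor_le (by linarith)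
    set A := ∑ i ∈ Finset.Icc (1 : ℤ) (n:ℤ), ∑ j ∈ Finset.Icc (1 : ℤ) (n:ℤ),
        (max (1 - |((i - j : ℤ) : ℝ)| / θ) 0) ^ 2 with hAdef
    rw [hred θ A rfl]
    set R : ℝ := min (n:ℝ) ((m:ℕ):ℝ) with hRdef
    have hR1 : (1:ℝ) ≤ R :=
      le_min (by exact_mod_cast hn) (by exact_mod_cast hm1)
    have hR0 : (0:ℝ) < R := lt_of_lt_of_le one_pos hR1
    have hTlow : (n:ℝ)/2 * (R + 1/R) ≤ A := by
      rcases le_or_gt n m with hc | hc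
      · -- R = n
        have hRn : R = (n:ℝ) := by
          rw [hRdef]; exact min_eq_left (by exact_mod_cast hc)
        have hθn : (n:ℝ) ≤ θ := le_trans (by exact_mod_cast hc) hθm
        have := Tmono n (n:ℝ) θ hn0 hθn
        rw [Tn_val n hn] at this
        have hval : (n:ℝ)/2 * (R + 1/R) = ((n:ℝ)^2+1)/2 := by
          rw [hRn]; field_simp
        rw [hval]
        exact this
      · -- R = m
        have hRm : R = (m:ℝ) := by
          rw [hRdef]; exact min_eq_right (by exact_mod_cast hc.le)
        have hm0' : (0:ℝ) < m := by exact_mod_cast hm1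
        have hmono := Tmono n (m:ℝ) θ hm0' hθm
        have hb := Tm_bound n m hm1 hc
        rw [hRm]
        exact le_trans hb hmono
    have hAnn : 0 ≤ (n:ℝ)/2 * (R + 1/R) := by positivity
    have hsq : ((n:ℝ)/2 * (R + 1/R))^2 ≤ A^2 := by
      exact pow_le_pow_left₀ hAnn hTlow 2
    have hcalc : (1/4) * (R + 1/R)^2 = ((n:ℝ)/2 * (R + 1/R))^2 / (n:ℝ)^2 := by
      field_simp
      ring
    rw [ge_iff_le, hcalc]
    gcongr
  · -- equality θ = n
    intro hθn
    subst hθn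
    have hfl : Nat.floor ((n:ℝ)) = n := Nat.floor_natCast n
    rw [hred (n:ℝ) _ (Tn_val n hn), hfl, min_self]
    field_simp
    ring
  · -- equality θ = 1
    intro hθ1
    subst hθ1
    have hfl : Nat.floor ((1:ℝ)) = 1 := Nat.floor_one
    have hT1 : ∑ i ∈ Finset.Icc (1 : ℤ) (n:ℤ), ∑ j ∈ Finset.Icc (1 : ℤ) (n:ℤ),
        (max (1 - |((i - j : ℤ) : ℝ)| / 1) 0) ^ 2 = (n:ℝ) := by
      rw [Tval]
      have : ∀ s ∈ range (n-1), ((n:ℝ)-1-s) * (max (1 - ((s:ℝ)+1)/1) 0)^2 = 0 := by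
        intro s _
        have : max (1 - ((s:ℝ)+1)/1) 0 = 0 := by
          apply max_eq_right
          have : (0:ℝ) ≤ s := Nat.cast_nonneg s
          rw [div_one]
          linarith
        rw [this]
        ring
      rw [Finset.sum_congr rfl this]
      simp
    rw [hred 1 _ hT1, hfl]
    have hmin : min (n:ℝ) (((1:ℕ)):ℝ) = 1 := by
      rw [Nat.cast_one]; exact min_eq_right (by exact_mod_cast hn)
    rw [hmin, div_self (by positivity : ((n:ℝ)^2) ≠ 0)]
    norm_num
end
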